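/- The number of aperiodic (primitive) words of length n on the alphabet {1,...,a} with letter i appearing exactly r_i times equals Σ_{d | gcd(n,r_1,...,r_a)} μ(d) · (n/d)!/((r_1/d)!···(r_a/d)!). -/

import Mathlib

set_option linter.unusedSectionVars false
open scoped Nat
open Fin.NatCast



/-- Cyclic rotation of a word `w : Fin n → Fin a` by `d` places. -/
def rot (n a : ℕ) (w : Fin n → Fin a) (d : Fin n) : Fin n → Fin a := fun i => w (i + d)

/-- A word is aperiodic (primitive) if it is not equal to any of its nontrivial
cyclic rotations. -/
def Primitive (n a : ℕ) [NeZero n] (w : Fin n → Fin a) : Prop :=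
  ∀ d : Fin n, d ≠ 0 → rot n a w d ≠ w

/-- The number of occurrences of the letter `c` in the word `w`. -/
def content (n a : ℕ) (w : Fin n → Fin a) (c : Fin a) : ℕ :=
  (Finset.univ.filter fun i => w i = c).card


lemma content_eq_card (n a : ℕ) (w : Fin n → Fin a) (c : Fin a) :
    content n a w c = Fintype.card {i // w i = c} := by
  rw [content, Fintype.card_subtype]

/-- fiber of sigma fst -/
def sigmaFstFiber {ι : Type*} {β : ι → Type*} (c : ι) : {y : Σ i, β i // y.1 = c} ≃ β c where
  toFun y := cast (congrArg β y.2) y.1.2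
  invFun b := ⟨⟨c, b⟩, rfl⟩
  left_inv := by rintro ⟨⟨i, b⟩, rfl⟩; rfl
  right_inv b := rfl

lemma exists_word (n a : ℕ) (r : Fin a → ℕ) (hr : ∑ i, r i = n) :
    ∃ w : Fin n → Fin a, ∀ c, content n a w c = r c := by
  have hcard : Fintype.card (Σ i : Fin a, Fin (r i)) = Fintype.card (Fin n) := by
    simp [hr]
  let E := Fintype.equivOfCardEq hcard
  refine ⟨fun x => (E.symm x).1, fun c => ?_⟩
  rw [content_eq_card]
  have e1 : {i : Fin n // (E.symm i).1 = c} ≃ {y : Σ i : Fin a, Fin (r i) // y.1 = c} :=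
    (Equiv.subtypeEquiv E.symm (fun _ => Iff.rfl))
  rw [Fintype.card_congr (e1.trans (sigmaFstFiber c)), Fintype.card_fin]

/-- permutation matching two words with the same content -/
lemma exists_perm (n a : ℕ) (w w' : Fin n → Fin a) (h : ∀ c, content n a w c = content n a w' c) :
    ∃ τ : Equiv.Perm (Fin n), w' ∘ τ = w := by
  have hc : ∀ c, Fintype.card {i // w i = c} = Fintype.card {i // w' i = c} := by
    intro c; rw [← content_eq_card, ← content_eq_card, h]
  let e : ∀ c, {i // w i = c} ≃ {i // w' i = c} := fun c => Fintype.equivOfCardEq (hc c)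
  refine ⟨(Equiv.sigmaFiberEquiv w).symm.trans ((Equiv.sigmaCongrRight e).trans
    (Equiv.sigmaFiberEquiv w')), ?_⟩
  funext x
  exact (e (w x) ⟨x, rfl⟩).2

lemma card_words (n a : ℕ) (r : Fin a → ℕ) (hr : ∑ i, r i = n) :
    Nat.card {w : Fin n → Fin a // ∀ c, content n a w c = r c} =
      Nat.multinomial Finset.univ r := by
  obtain ⟨w₀, hw₀⟩ := exists_word n a r hr
  -- content of w₀ ∘ σ is the same
  have hcomp : ∀ (σ : Equiv.Perm (Fin n)) c, content n a (w₀ ∘ σ) c = r c := by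
    intro σ c
    rw [content_eq_card,
      show Fintype.card {i // (w₀ ∘ ⇑σ) i = c} = Fintype.card {i // w₀ i = c} from
        Fintype.card_congr (Equiv.subtypeEquiv σ fun i => Iff.rfl),
      ← content_eq_card, hw₀]
  classical
  have fib : ∀ w : {w : Fin n → Fin a // ∀ c, content n a w c = r c},
      (Finset.univ.filter fun σ : Equiv.Perm (Fin n) =>
        (⟨w₀ ∘ σ, hcomp σ⟩ : {w : Fin n → Fin a // ∀ c, content n a w c = r c}) = w).card
      = ∏ c, (r c)! := by
    intro w
    obtain ⟨τ, hτ⟩ := exists_perm n a w.1 w₀ (fun c => by rw [hw₀, w.2])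
    have e2 : {σ : Equiv.Perm (Fin n) // w.1 ∘ σ = w.1} ≃
        {σ : Equiv.Perm (Fin n) //
          (⟨w₀ ∘ σ, hcomp σ⟩ : {w : Fin n → Fin a // ∀ c, content n a w c = r c}) = w} := by
      refine ⟨fun σ => ⟨σ.1.trans τ, ?_⟩, fun σ => ⟨σ.1.trans τ.symm, ?_⟩, ?_, ?_⟩
      · apply Subtype.ext; funext x
        exact (congrFun hτ (σ.1 x)).trans (congrFun σ.2 x)
      · have : w.1 ∘ (σ.1.trans τ.symm) = (w.1 ∘ τ.symm) ∘ σ.1 := rfl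
        rw [this]
        have hw : w.1 ∘ (τ.symm : Equiv.Perm (Fin n)) = w₀ := by
          funext x; have := congrFun hτ (τ.symm x); simpa using this.symm
        rw [hw]
        have := congrArg Subtype.val σ.2
        simpa using this
      · intro σ; ext x; simp
      · intro σ; ext x; simp
    rw [show (Finset.univ.filter fun σ : Equiv.Perm (Fin n) =>
        (⟨w₀ ∘ σ, hcomp σ⟩ : {w : Fin n → Fin a // ∀ c, content n a w c = r c}) = w).card
        = Fintype.card {σ : Equiv.Perm (Fin n) // w.1 ∘ σ = w.1} by
      rw [Fintype.card_congr e2, ← Fintype.card_subtype], DomMulAct.stabilizer_card]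
    exact Finset.prod_congr rfl fun c _ => by rw [← content_eq_card, w.2]
  have key : n ! = Fintype.card {w : Fin n → Fin a // ∀ c, content n a w c = r c}
      * ∏ c, (r c)! := by
    calc n ! = Fintype.card (Equiv.Perm (Fin n)) := by
          rw [Fintype.card_perm, Fintype.card_fin]
      _ = (Finset.univ : Finset (Equiv.Perm (Fin n))).card := (Finset.card_univ).symm
      _ = ∑ w : {w : Fin n → Fin a // ∀ c, content n a w c = r c},
            (Finset.univ.filter fun σ : Equiv.Perm (Fin n) =>
              (⟨w₀ ∘ σ, hcomp σ⟩ : {w : Fin n → Fin a // ∀ c, content n a w c = r c}) = w).card :=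
          Finset.card_eq_sum_card_fiberwise (fun x _ => Finset.mem_univ _)
      _ = ∑ _w : {w : Fin n → Fin a // ∀ c, content n a w c = r c}, ∏ c, (r c)! :=
          Finset.sum_congr rfl fun w _ => fib w
      _ = _ := by rw [Finset.sum_const, Finset.card_univ, smul_eq_mul]
  have hmul := Nat.multinomial_spec Finset.univ r
  rw [hr] at hmul
  have hpos : 0 < ∏ c, (r c)! := Finset.prod_pos fun c _ => Nat.factorial_pos _
  rw [Nat.card_eq_fintype_card]
  apply Nat.eq_of_mul_eq_mul_right hpos
  rw [← key, ← hmul, mul_comm]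

section periods
variable {n a : ℕ} [NeZero n]

def isPer (w : Fin n → Fin a) (k : ℕ) : Prop := ∀ i : Fin n, w (i + (k : Fin n)) = w i

lemma apply_mk_congr {m a : ℕ} (u : Fin m → Fin a) {x y : ℕ} (hx : x < m) (hy : y < m)
    (h : x = y) : u ⟨x, hx⟩ = u ⟨y, hy⟩ := by subst h; rfl

lemma npos : 0 < n := Nat.pos_of_ne_zero (NeZero.ne n)

lemma add_natCast_val (i : Fin n) (k : ℕ) : (i + (k : Fin n)).val = (i.val + k) % n := by
  rw [Fin.add_def]
  show (i.val + ((k : Fin n)).val) % n = _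
  rw [Fin.val_natCast, Nat.add_mod_mod]

lemma isPer_apply {w : Fin n → Fin a} {k : ℕ} (h : isPer w k) (x : ℕ) (hx : x < n) :
    w ⟨(x + k) % n, Nat.mod_lt _ npos⟩ = w ⟨x, hx⟩ := by
  have := h ⟨x, hx⟩
  rwa [show (⟨x, hx⟩ + (k : Fin n) : Fin n) = ⟨(x + k) % n, Nat.mod_lt _ npos⟩ from
    Fin.ext (add_natCast_val ⟨x, hx⟩ k)] at this

lemma isPer_of {w : Fin n → Fin a} {k : ℕ}
    (h : ∀ x (hx : x < n), w ⟨(x + k) % n, Nat.mod_lt _ npos⟩ = w ⟨x, hx⟩) : isPer w k := by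
  intro i
  have := h i.val i.2
  rwa [show (⟨(i.val + k) % n, Nat.mod_lt _ npos⟩ : Fin n) = i + (k : Fin n) from
    Fin.ext (add_natCast_val i k).symm, Fin.eta] at this

lemma isPer_n (w : Fin n → Fin a) : isPer w n := by
  intro i; rw [Fin.natCast_self, add_zero]

lemma isPer_add {w : Fin n → Fin a} {k l : ℕ} (h1 : isPer w k) (h2 : isPer w l) :
    isPer w (k + l) := by
  intro i
  have : i + ((k + l : ℕ) : Fin n) = (i + (l : Fin n)) + (k : Fin n) := by
    push_cast; abel
  rw [this, h1, h2]

lemma isPer_mul {w : Fin n → Fin a} {k : ℕ} (h : isPer w k) (t : ℕ) : isPer w (k * t) := by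
  induction t with
  | zero => intro i; simp
  | succ t ih => rw [Nat.mul_succ]; exact isPer_add ih h

lemma isPer_sub {w : Fin n → Fin a} {k l : ℕ} (h1 : isPer w k) (h2 : isPer w l) (hle : l ≤ k) :
    isPer w (k - l) := by
  intro i
  have h3 : (i + ((k - l : ℕ) : Fin n)) + (l : Fin n) = i + (k : Fin n) := by
    rw [add_assoc, ← Nat.cast_add, Nat.sub_add_cancel hle]
  calc w (i + ((k - l : ℕ) : Fin n)) = w ((i + ((k - l : ℕ) : Fin n)) + (l : Fin n)) :=
        (h2 _).symm
    _ = w (i + (k : Fin n)) := by rw [h3]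
    _ = w i := h1 i

lemma isPer_mod {w : Fin n → Fin a} {k m : ℕ} (h : isPer w k) (hm : isPer w m) :
    isPer w (k % m) := by
  have h1 := Nat.mod_add_div k m
  have h2 : k % m = k - m * (k / m) := by omega
  rw [h2]
  exact isPer_sub h (isPer_mul hm _) (by omega)

lemma exists_minPer (w : Fin n → Fin a) :
    ∃ m, 0 < m ∧ m ∣ n ∧ ∀ k, isPer w k ↔ m ∣ k := by
  have Hex : ∃ k, 0 < k ∧ isPer w k := ⟨n, npos, isPer_n w⟩
  classical
  set m := Nat.find Hex with hm
  obtain ⟨hm0, hmp⟩ := Nat.find_spec Hex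
  have hdvd : ∀ k, isPer w k → m ∣ k := by
    intro k hk
    have hmod : isPer w (k % m) := isPer_mod hk hmp
    rcases Nat.eq_zero_or_pos (k % m) with h | h
    · exact Nat.dvd_of_mod_eq_zero h
    · exact absurd ⟨h, hmod⟩ (Nat.find_min Hex (Nat.mod_lt _ hm0))
  refine ⟨m, hm0, hdvd n (isPer_n w), fun k => ⟨hdvd k, ?_⟩⟩
  rintro ⟨t, rfl⟩
  exact isPer_mul hmp t

lemma rot_eq_iff (w : Fin n → Fin a) (d : Fin n) : rot n a w d = w ↔ isPer w d.val := by
  rw [funext_iff]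
  unfold rot isPer
  rw [Fin.cast_val_eq_self]

lemma primitive_iff (w : Fin n → Fin a) : Primitive n a w ↔ ∀ k, isPer w k → n ∣ k := by
  constructor
  · intro h k hk
    by_contra hnd
    have hkm : isPer w (k % n) := isPer_mod hk (isPer_n w)
    have hne : (⟨k % n, Nat.mod_lt _ npos⟩ : Fin n) ≠ 0 := by
      simp only [ne_eq, Fin.ext_iff, Fin.val_zero]
      exact fun hc => hnd (Nat.dvd_of_mod_eq_zero hc)
    exact h _ hne ((rot_eq_iff w _).2 hkm)
  · intro h d hd
    rw [ne_eq, rot_eq_iff]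
    intro hper
    have h0 : d.val = 0 := Nat.eq_zero_of_dvd_of_lt (h d.val hper) d.2
    exact hd (Fin.ext (by simpa using h0))

end periods

section rep
variable {m n a : ℕ} [NeZero m] [NeZero n]

def rep (m n a : ℕ) [NeZero m] (u : Fin m → Fin a) : Fin n → Fin a :=
  fun i => u ⟨i.val % m, Nat.mod_lt _ (Nat.pos_of_ne_zero (NeZero.ne m))⟩

lemma rep_isPer_iff (hmn : m ∣ n) (u : Fin m → Fin a) (k : ℕ) :
    isPer (rep m n a u) k ↔ isPer u k := by
  constructor
  · intro H
    apply isPer_of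
    intro y hy
    have hyn : y < n := lt_of_lt_of_le hy (Nat.le_of_dvd npos hmn)
    have H2 := isPer_apply H y hyn
    unfold rep at H2
    calc u ⟨(y + k) % m, Nat.mod_lt _ npos⟩
        = u ⟨(y + k) % n % m, Nat.mod_lt _ npos⟩ :=
          apply_mk_congr u _ _ (by rw [Nat.mod_mod_of_dvd _ hmn])
      _ = u ⟨y % m, Nat.mod_lt _ npos⟩ := H2
      _ = u ⟨y, hy⟩ := apply_mk_congr u _ _ (Nat.mod_eq_of_lt hy)
  · intro H
    apply isPer_of
    intro x hx
    have H2 := isPer_apply H (x % m) (Nat.mod_lt _ npos)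
    unfold rep
    exact (apply_mk_congr u (Nat.mod_lt _ npos) (Nat.mod_lt _ npos)
      (show (x + k) % n % m = (x % m + k) % m by
        rw [Nat.mod_mod_of_dvd _ hmn, Nat.mod_add_mod])).trans H2
lemma rep_restrict (hmn : m ∣ n) (w : Fin n → Fin a) (h : isPer w m) :
    rep m n a (fun j => w (Fin.castLE (Nat.le_of_dvd npos hmn) j)) = w := by
  funext i
  have hper : isPer w (m * (i.val / m)) := isPer_mul h _
  have := isPer_apply hper (i.val % m) (lt_of_lt_of_le (Nat.mod_lt _ (npos (n := m)))
    (Nat.le_of_dvd npos hmn))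
  unfold rep
  simp only [Fin.castLE_mk]
  rw [show w i = w ⟨i.val, i.2⟩ from by rw [Fin.eta]]
  rw [← this]
  apply apply_mk_congr
  rw [Nat.mod_add_div, Nat.mod_eq_of_lt i.2]

lemma restrict_rep (hmn : m ∣ n) (u : Fin m → Fin a) :
    (fun j => rep m n a u (Fin.castLE (Nat.le_of_dvd npos hmn) j)) = u := by
  funext j
  unfold rep
  simp only [Fin.coe_castLE]
  rw [apply_mk_congr u _ j.2 (Nat.mod_eq_of_lt j.2), Fin.eta]

lemma content_rep (hmn : m ∣ n) (u : Fin m → Fin a) (c : Fin a) :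
    content n a (rep m n a u) c = (n / m) * content m a u c := by
  classical
  unfold content rep
  rw [mul_comm, show (n/m) = (Finset.univ : Finset (Fin (n/m))).card from by simp,
    ← Finset.card_product]
  apply Finset.card_nbij' (i := fun x => (⟨x.val % m, Nat.mod_lt _ npos⟩, ⟨x.val / m,
      Nat.div_lt_div_of_lt_of_dvd hmn x.2⟩))
    (j := fun p => ⟨p.1.val + m * p.2.val, by
      calc p.1.val + m * p.2.val < m + m * p.2.val := by
            exact Nat.add_lt_add_right p.1.2 _
        _ = m * (p.2.val + 1) := by ring
        _ ≤ m * (n / m) := Nat.mul_le_mul_left m p.2.2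
        _ = n := Nat.mul_div_cancel' hmn⟩)
  · intro x hx
    simp only [Finset.mem_coe, Finset.mem_filter, Finset.mem_univ, true_and] at hx ⊢
    rw [Finset.mem_product]
    refine ⟨Finset.mem_filter.2 ⟨Finset.mem_univ _, ?_⟩, Finset.mem_univ _⟩
    exact hx
  · intro p hp
    simp only [Finset.mem_coe, Finset.mem_filter, Finset.mem_univ, true_and]
    rw [Finset.mem_coe, Finset.mem_product, Finset.mem_filter] at hp
    rw [apply_mk_congr u (Nat.mod_lt _ npos) p.1.2 (by
      rw [Nat.add_mul_mod_self_left, Nat.mod_eq_of_lt p.1.2]), Fin.eta]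
    exact hp.1.2
  · intro x hx
    simp only [Fin.ext_iff]
    rw [Nat.mod_add_div]
  · intro p hp
    simp only [Prod.ext_iff, Fin.ext_iff]
    constructor
    · rw [Nat.add_mul_mod_self_left, Nat.mod_eq_of_lt p.1.2]
    · rw [Nat.add_mul_div_left _ _ (npos (n := m)), Nat.div_eq_of_lt p.1.2, zero_add]

end rep
noncomputable def PrimCount (m a : ℕ) (s : Fin a → ℕ) : ℕ :=
  Nat.card {u : Fin m → Fin a //
    (∀ d : Fin m, d.val ≠ 0 → rot m a u d ≠ u) ∧ ∀ c, content m a u c = s c}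

lemma primitive_val_iff {m a : ℕ} [NeZero m] (u : Fin m → Fin a) :
    (∀ d : Fin m, d.val ≠ 0 → rot m a u d ≠ u) ↔ Primitive m a u := by
  unfold Primitive
  refine forall_congr' fun d => ?_
  rw [ne_eq (a := d), Fin.ext_iff, Fin.val_zero]

lemma decomp (n a : ℕ) [NeZero n] (r : Fin a → ℕ) (hr : ∑ i, r i = n) :
    Nat.multinomial Finset.univ r =
      ∑ e ∈ (n.gcd (Finset.univ.gcd r)).divisors, PrimCount (n / e) a (fun c => r c / e) := by
  classical
  rw [← card_words n a r hr, Nat.card_eq_fintype_card, Fintype.card_subtype]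
  set g := n.gcd (Finset.univ.gcd r) with hg
  have hgn : g ∣ n := Nat.gcd_dvd_left _ _
  have hg0 : g ≠ 0 := fun h => (NeZero.ne n) (Nat.eq_zero_of_gcd_eq_zero_left h)
  have hgr : ∀ c, g ∣ r c := fun c =>
    (Nat.gcd_dvd_right _ _).trans (Finset.gcd_dvd (Finset.mem_univ c))
  -- the partition
  have hpart : (Finset.univ.filter fun w : Fin n → Fin a => ∀ c, content n a w c = r c) =
      g.divisors.biUnion (fun e => Finset.univ.filter
        (fun w : Fin n → Fin a => (∀ c, content n a w c = r c) ∧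
          isPer w (n / e) ∧ ∀ k, isPer w k → (n / e) ∣ k)) := by
    ext w
    simp only [Finset.mem_biUnion, Finset.mem_filter, Finset.mem_univ, true_and]
    constructor
    · intro hw
      obtain ⟨m, hm0, hmn, hiff⟩ := exists_minPer w
      haveI : NeZero m := ⟨hm0.ne'⟩
      have hwrep := rep_restrict hmn w ((hiff m).2 dvd_rfl)
      have hco : ∀ c, r c = (n / m) * content m a (fun j =>
          w (Fin.castLE (Nat.le_of_dvd npos hmn) j)) c := by
        intro c
        rw [← hw c, ← content_rep hmn, hwrep]
      have hegcd : (n / m) ∣ g := Nat.dvd_gcd (Nat.div_dvd_of_dvd hmn)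
        (Finset.dvd_gcd fun c _ => ⟨_, hco c⟩)
      refine ⟨n / m, Nat.mem_divisors.2 ⟨hegcd, hg0⟩, hw, ?_, ?_⟩
      · rw [Nat.div_div_self hmn (NeZero.ne n)]
        exact (hiff m).2 dvd_rfl
      · rw [Nat.div_div_self hmn (NeZero.ne n)]
        exact fun k hk => (hiff k).1 hk
    · rintro ⟨e, _, hw, _⟩
      exact hw
  rw [hpart, Finset.card_biUnion]
  · -- per-part cardinality
    apply Finset.sum_congr rfl
    intro e he
    obtain ⟨heg, -⟩ := Nat.mem_divisors.1 he
    have hen : e ∣ n := heg.trans hgn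
    have he0 : e ≠ 0 := fun h => hg0 (by simpa [h] using heg)
    set m := n / e with hm
    have hmn : m ∣ n := Nat.div_dvd_of_dvd hen
    have hm0 : m ≠ 0 := Nat.div_ne_zero_iff.2 ⟨he0, Nat.le_of_dvd (Nat.pos_of_ne_zero (NeZero.ne n)) hen⟩
    haveI : NeZero m := ⟨hm0⟩
    have hnm : n / m = e := Nat.div_div_self hen (NeZero.ne n)
    rw [PrimCount, Nat.card_eq_fintype_card, Fintype.card_subtype]
    apply Finset.card_nbij' (i := fun w => fun j => w (Fin.castLE (Nat.le_of_dvd npos hmn) j))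
      (j := fun u => rep m n a u)
    · intro w hw
      simp only [Finset.mem_coe, Finset.mem_filter, Finset.mem_univ, true_and] at hw ⊢
      obtain ⟨hWc, hper, hmin⟩ := hw
      have hwrep := rep_restrict hmn w hper
      set u := fun j => w (Fin.castLE (Nat.le_of_dvd npos hmn) j) with hu
      have hiso : ∀ k, isPer u k ↔ isPer w k := by
        intro k
        rw [← rep_isPer_iff hmn u k, hwrep]
      constructor
      · exact (primitive_val_iff u).2 ((primitive_iff u).2 fun k hk => hmin k ((hiso k).1 hk))
      · intro c
        have : r c = e * content m a u c := by
          rw [← hWc c, ← hnm, ← content_rep hmn, hwrep]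
        rw [this, Nat.mul_div_cancel_left _ (Nat.pos_of_ne_zero he0)]
    · intro u hu
      simp only [Finset.mem_coe, Finset.mem_filter, Finset.mem_univ, true_and] at hu ⊢
      obtain ⟨hprim, hcont⟩ := hu
      refine ⟨?_, ?_, ?_⟩
      · intro c
        rw [content_rep hmn, hnm, hcont c, Nat.mul_div_cancel' (heg.trans (hgr c))]
      · exact (rep_isPer_iff hmn u m).2 (isPer_n u)
      · intro k hk
        exact (primitive_iff u).1 ((primitive_val_iff u).1 hprim) k ((rep_isPer_iff hmn u k).1 hk)
    · intro w hw
      simp only [Finset.mem_coe, Finset.mem_filter, Finset.mem_univ, true_and] at hw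
      exact rep_restrict hmn w hw.2.1
    · intro u _
      exact restrict_rep hmn u
  · -- disjointness
    intro e he e' he' hne
    show Disjoint _ _
    rw [Finset.disjoint_filter]
    rintro w - ⟨-, hp, hmin⟩ ⟨-, hp', hmin'⟩
    obtain ⟨heg, -⟩ := Nat.mem_divisors.1 he
    obtain ⟨heg', -⟩ := Nat.mem_divisors.1 he'
    have hen : e ∣ n := heg.trans hgn
    have hen' : e' ∣ n := heg'.trans hgn
    have h1 : n / e = n / e' := Nat.dvd_antisymm (hmin _ hp') (hmin' _ hp)
    apply hne
    rw [← Nat.div_div_self hen (NeZero.ne n), h1, Nat.div_div_self hen' (NeZero.ne n)]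
noncomputable def Mq (a : ℕ) (r : Fin a → ℕ) : ℕ → ℚ :=
  fun x => (Nat.multinomial Finset.univ (fun c => r c / x) : ℚ)

noncomputable def Pq (n a : ℕ) (r : Fin a → ℕ) : ℕ → ℚ :=
  fun x => (PrimCount (n / x) a (fun c => r c / x) : ℚ)


/-- The number of aperiodic (primitive) words of length `n ≥ 1` on the alphabet
`{1,…,a}` with letter `i` appearing exactly `r i` times equals
`∑_{d | gcd(n,r₁,…,r_a)} μ(d) (n/d)! / ((r₁/d)! ⋯ (r_a/d)!)`. -/
theorem stmt2 (n a : ℕ) [NeZero n] (r : Fin a → ℕ) (hr : ∑ i, r i = n) :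
    (Nat.card {w : Fin n → Fin a // Primitive n a w ∧ ∀ i, content n a w i = r i} : ℚ) =
      ∑ d ∈ (Nat.gcd n (Finset.univ.gcd r)).divisors,
        (ArithmeticFunction.moebius d : ℚ) * (Nat.factorial (n / d) : ℚ) /
          ∏ i, (Nat.factorial (r i / d) : ℚ) := by
  classical
  set g := Nat.gcd n (Finset.univ.gcd r) with hgdef
  have hgn : g ∣ n := Nat.gcd_dvd_left _ _
  have hg0 : g ≠ 0 := fun h => (NeZero.ne n) (Nat.eq_zero_of_gcd_eq_zero_left h)
  have hgpos : 0 < g := Nat.pos_of_ne_zero hg0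
  have hgr : ∀ c, g ∣ r c := fun c =>
    (Nat.gcd_dvd_right _ _).trans (Finset.gcd_dvd (Finset.mem_univ c))
  have npos' : 0 < n := Nat.pos_of_ne_zero (NeZero.ne n)
  have hsum : ∀ d, d ∣ g → ∑ c, r c / d = n / d := by
    intro d hd
    have hd0 : d ≠ 0 := fun h => hg0 (by simpa [h] using hd)
    have h1 : d * ∑ c, r c / d = n := by
      rw [Finset.mul_sum, Finset.sum_congr rfl
        (fun c _ => Nat.mul_div_cancel' (hd.trans (hgr c))), hr]
    rw [← h1, Nat.mul_div_cancel_left _ (Nat.pos_of_ne_zero hd0)]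
  have hgcd : ∀ d, d ∣ g → (n / d).gcd (Finset.univ.gcd fun c => r c / d) = g / d := by
    intro d hd
    have hd0 : 0 < d := Nat.pos_of_ne_zero (fun h => hg0 (by simpa [h] using hd))
    have key : d * ((n / d).gcd (Finset.univ.gcd fun c => r c / d)) = g := by
      have h2 : (Finset.univ : Finset (Fin a)).gcd (fun c => d * (r c / d)) =
          (Finset.univ : Finset (Fin a)).gcd r :=
        Finset.gcd_congr rfl fun c _ => Nat.mul_div_cancel' (hd.trans (hgr c))
      rw [← Nat.gcd_mul_left, Nat.mul_div_cancel' (hd.trans hgn), hgdef]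
      congr 1
      rw [← h2, Finset.gcd_mul_left, normalize_eq]
    exact (Nat.div_eq_of_eq_mul_left hd0 (by rw [← key]; ring)).symm
  have hdir : ∀ k > 0, k ∈ {x | x ∣ g} →
      ∑ i ∈ k.divisors, (fun k' => Pq n a r (g / k')) i = (fun k' => Mq a r (g / k')) k := by
    intro k hk0 hkg
    simp only [Set.mem_setOf_eq] at hkg
    have hd : g / k ∣ g := Nat.div_dvd_of_dvd hkg
    have hdn : g / k ∣ n := hd.trans hgn
    have hd0 : g / k ≠ 0 := fun h => hg0 (by simpa [h] using hd)
    haveI : NeZero (n / (g / k)) :=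
      ⟨Nat.div_ne_zero_iff.2 ⟨hd0, Nat.le_of_dvd npos' hdn⟩⟩
    have hd2 := decomp (n / (g / k)) a (fun c => r c / (g / k)) (hsum _ hd)
    rw [hgcd _ hd, Nat.div_div_self hkg hg0] at hd2
    have hd2' : Mq a r (g / k) = ∑ e ∈ k.divisors, Pq n a r ((g / k) * e) := by
      rw [Mq, hd2]
      push_cast
      apply Finset.sum_congr rfl
      intro e _
      rw [Pq]
      norm_cast
      simp [Nat.div_div_eq_div_mul]
    have hgi : ∀ i ∈ k.divisors, g / i = (g / k) * (k / i) := by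
      intro i hi
      obtain ⟨hik, -⟩ := Nat.mem_divisors.1 hi
      have hi0 : 0 < i := Nat.pos_of_mem_divisors hi
      have h5 : (g / k) * (k / i) * i = g := by
        rw [mul_assoc, Nat.div_mul_cancel hik, Nat.div_mul_cancel hkg]
      exact Nat.div_eq_of_eq_mul_left hi0 h5.symm
    calc ∑ i ∈ k.divisors, (fun k' => Pq n a r (g / k')) i
        = ∑ i ∈ k.divisors, (fun e => Pq n a r ((g / k) * e)) (k / i) :=
          Finset.sum_congr rfl fun i hi => congrArg (Pq n a r) (hgi i hi)
      _ = ∑ i ∈ k.divisors, Pq n a r ((g / k) * i) :=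
          Nat.sum_div_divisors k (fun e => Pq n a r ((g / k) * e))
      _ = (fun k' => Mq a r (g / k')) k := hd2'.symm
  have key := (ArithmeticFunction.sum_eq_iff_sum_smul_moebius_eq_on {x | x ∣ g}
    (fun m n hmn hn => hmn.trans hn)).mp hdir g hgpos (by exact dvd_rfl)
  have hBg : Pq n a r (g / g) = (Nat.card {w : Fin n → Fin a // Primitive n a w ∧
      ∀ i, content n a w i = r i} : ℚ) := by
    have hP : PrimCount n a r = Nat.card {w : Fin n → Fin a // Primitive n a w ∧
        ∀ i, content n a w i = r i} :=
      Nat.card_congr (Equiv.subtypeEquiv (Equiv.refl _) fun w => by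
        simp only [Equiv.refl_apply]
        exact and_congr (primitive_val_iff w) Iff.rfl)
    rw [Pq]
    simp only [Nat.div_self hgpos, Nat.div_one]
    rw [hP]
  rw [← hBg, ← key]
  rw [Nat.sum_divisorsAntidiagonal
    (fun p q => (ArithmeticFunction.moebius p) • Mq a r (g / q))]
  apply Finset.sum_congr rfl
  intro i hi
  obtain ⟨hig, -⟩ := Nat.mem_divisors.1 hi
  have hAi : Mq a r (g / (g / i)) = Mq a r i := congrArg _ (Nat.div_div_self hig hg0)
  have hspec := Nat.multinomial_spec Finset.univ (fun c => r c / i)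
  rw [hsum i hig] at hspec
  have hcast : (∏ c, ((r c / i)! : ℚ)) * Mq a r i = ((n / i)! : ℚ) := by
    rw [Mq]
    exact_mod_cast congrArg (Nat.cast (R := ℚ)) hspec
  have hprodne : (∏ c, ((r c / i)! : ℚ)) ≠ 0 :=
    Finset.prod_ne_zero_iff.2 fun c _ => Nat.cast_ne_zero.2 (Nat.factorial_ne_zero _)
  have hAval : Mq a r i = ((n / i)! : ℚ) / ∏ c, ((r c / i)! : ℚ) :=
    (eq_div_iff hprodne).2 (by rw [mul_comm]; exact hcast)
  rw [hAi, zsmul_eq_mul, hAval, mul_div_assoc]
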